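/- Fix integers n ≥ 1, 1 ≤ h ≤ n, 0 ≤ l ≤ n−1 and reals λ ∈ (0,1], θ ∈ (0,1), and let q^{(n,h)}_0, …, q^{(n,h)}_{n−l−1} ∈ ℝ[j,k] be the coefficients of the quotient polynomial Q_{n,h,l}. Then: (a) for every 1 ≤ i ≤ n−l−1, Σ_{u=0}^{h−1} (−1)^u C(h−1,u) u^l Σ_{v=0}^{n−h} (−1)^{n−h−v} C(n−h,v) q^{(n,h)}_{n−l−1−i}(u,v) = 0; (b) if 0 ≤ l ≤ h−1, then Σ_{u=0}^{h−1} (−1)^u C(h−1,u) u^l Σ_{v=0}^{n−h} (−1)^{n−h−v} C(n−h,v) q^{(n,h)}_{n−l−1}(u,v) = (−1)^{h−1}(h−1)!(n−h)! · c^{(λ,θ)}_{n,h,l}, where c^{(λ,θ)}_{n,h,l} is the coefficient of the monomial j^{h−l−1}k^{n−h} in q^{(n,h)}_{n−l−1}; and if h ≤ l ≤ n−1, this double sum is 0. (Here q^{(n,h)}_i(u,v) denotes evaluation of the bivariate polynomial at (j,k) = (u,v), with the convention 0^0 = 1.) -/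

import Mathlib

/-!
Measure degrees with `d` counted together with `j` and `k`. Every factor of `P_{n,h}` and of
`D_{n,h,l}` is affine in `(d, j, k)`, so `P` has total degree at most `2n + 2h + 2` and `D` at most
`n + 2h + l + 3`, with coefficient of `d ^ (n + 2h + l + 3)` the nonzero real `λθ^(h+1)`. Long
division by such a divisor does not raise total degree, so `q_{n-l-1-i}` has total degree at most
`n - l - 1 - i`.

On a monomial `j^a k^b` the double sum is the `(h-1)`-th finite difference of `u ↦ u^(l+a)`
times the `(n-h)`-th finite difference of `v ↦ v^b`. These vanish unless `l + a ≥ h - 1` and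
`b ≥ n - h`, which together with the degree bound forces `i = 0`, `a = h - l - 1` and
`b = n - h`; there the differences are `(h-1)!` and `(n-h)!`.
-/

open Polynomial

/-- Rising factorial in a commutative ring: `(a)_m = a (a+1) ⋯ (a+m−1)`, with `(a)_0 = 1`. -/
noncomputable def rfp {S : Type*} [CommRing S] (a : S) (m : ℕ) : S :=
  ∏ i ∈ Finset.range m, (a + (i : S))

/-- The base ring `R = ℝ[j,k]`. -/
abbrev R2 : Type := MvPolynomial (Fin 2) ℝ

/-- The variable `j` as a constant of `R[d]`. -/
noncomputable def Jv : Polynomial R2 := Polynomial.C (MvPolynomial.X 0)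

/-- The variable `k` as a constant of `R[d]`. -/
noncomputable def Kv : Polynomial R2 := Polynomial.C (MvPolynomial.X 1)

/-- Embedding of real scalars into `R[d]`. -/
noncomputable def cst (x : ℝ) : Polynomial R2 := Polynomial.C (MvPolynomial.C x)

/-- The dividend `P_{n,h}` in the polynomial long division (an element of `ℝ[j,k][d]`). -/
noncomputable def Pnh (n h : ℕ) (lam th : ℝ) : Polynomial R2 :=
  (X - 2 * Jv - 1) * (X + 2 * (h : Polynomial R2) - 2 * Jv - 1) * rfp (X - Jv) h *
    rfp (cst (1 - th) * X - Jv) h *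
    rfp (cst (lam * th) * X + (h : Polynomial R2) - (n : Polynomial R2) - Jv + Kv) n *
    rfp (cst th * X + (h : Polynomial R2) - (n : Polynomial R2) - Jv + Kv) n

/-- The divisor `D_{n,h,l}` in the polynomial long division (an element of `ℝ[j,k][d]`). -/
noncomputable def Dnhl (n h l : ℕ) (lam th : ℝ) : Polynomial R2 :=
  cst (lam * th) * X ^ (l + 1) * (X + (h : Polynomial R2) - 2 * Jv - 1) *
    rfp (cst th * X - Jv) h *
    rfp (X - (n : Polynomial R2) + (h : Polynomial R2) - 2 * Jv - 1 + Kv) (n + h + 1)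

open Finset fwdDiff

section FiniteDifferences

variable {R : Type*} [CommRing R]

theorem sum_range_neg_one_pow_sub_mul_choose_mul_pow_eq_fwdDiff (m p : ℕ) :
    ∑ u ∈ range (m + 1), (-1 : R) ^ (m - u) * (m.choose u : R) * (u : R) ^ p =
      (Δ_[1])^[m] (fun r : R ↦ r ^ p) 0 := by
  simp [fwdDiff_iter_eq_sum_shift, zsmul_eq_mul]

theorem sum_range_neg_one_pow_mul_choose_mul (m : ℕ) (g : ℕ → R) :
    ∑ u ∈ range (m + 1), (-1 : R) ^ u * (m.choose u : R) * g u =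
      (-1) ^ m * ∑ u ∈ range (m + 1), (-1 : R) ^ (m - u) * (m.choose u : R) * g u := by
  rw [mul_sum]
  refine sum_congr rfl fun u hu ↦ ?_
  have hexp : m + (m - u) = u + 2 * (m - u) := by grind
  rw [← mul_assoc, ← mul_assoc, ← pow_add, hexp, pow_add, pow_mul]
  simp

end FiniteDifferences

theorem sum_mul_sum_mul_eval_eq {S ι κ : Type*} [CommSemiring S] (q : MvPolynomial (Fin 2) S)
    (s : Finset ι) (t : Finset κ) (a : ι → S) (b : κ → S) (x : ι → S) (y : κ → S) :
    ∑ u ∈ s, a u *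
        ∑ v ∈ t, b v * MvPolynomial.eval (fun i ↦ if i = 0 then x u else y v) q =
      ∑ d ∈ q.support, MvPolynomial.coeff d q *
        ((∑ u ∈ s, a u * x u ^ d 0) * ∑ v ∈ t, b v * y v ^ d 1) := by
  simp only [MvPolynomial.eval_eq', Fin.prod_univ_two, Fin.isValue, if_pos, one_ne_zero, if_false,
    mul_sum, sum_mul]
  refine (sum_congr rfl fun u _ ↦ sum_comm).trans ?_
  rw [sum_comm]
  refine sum_congr rfl fun d _ ↦ ?_
  rw [sum_comm]
  exact sum_congr rfl fun v _ ↦ sum_congr rfl fun u _ ↦ by ring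

section JointTotalDegree

open MvPolynomial

variable {σ R : Type*} [CommRing R]

theorem MvPolynomial.totalDegree_X_le (i : σ) : (X i : MvPolynomial σ R).totalDegree ≤ 1 :=
  (totalDegree_monomial_le _ _).trans (by simp)

noncomputable def jointTotalDegree (F : Polynomial (MvPolynomial σ R)) : ℕ :=
  ((optionEquivLeft R σ).symm F).totalDegree

variable {F G : Polynomial (MvPolynomial σ R)} {a b : ℕ}

theorem jointTotalDegree_add_le_of_le (hF : jointTotalDegree F ≤ a)
    (hG : jointTotalDegree G ≤ a) : jointTotalDegree (F + G) ≤ a := by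
  simpa only [jointTotalDegree, map_add] using (totalDegree_add _ _).trans (max_le hF hG)

theorem jointTotalDegree_sub_le_of_le (hF : jointTotalDegree F ≤ a)
    (hG : jointTotalDegree G ≤ a) : jointTotalDegree (F - G) ≤ a := by
  simpa only [jointTotalDegree, map_sub] using (totalDegree_sub _ _).trans (max_le hF hG)

theorem jointTotalDegree_mul_le_of_le (hF : jointTotalDegree F ≤ a)
    (hG : jointTotalDegree G ≤ b) : jointTotalDegree (F * G) ≤ a + b := by
  simpa only [jointTotalDegree, map_mul] using (totalDegree_mul _ _).trans (add_le_add hF hG)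

theorem jointTotalDegree_prod_le {ι : Type*} (s : Finset ι)
    (F : ι → Polynomial (MvPolynomial σ R)) :
    jointTotalDegree (∏ i ∈ s, F i) ≤ ∑ i ∈ s, jointTotalDegree (F i) := by
  simpa only [jointTotalDegree, map_prod] using totalDegree_finsetProd _ _

theorem jointTotalDegree_C_C (r : R) :
    jointTotalDegree (Polynomial.C (C r) : Polynomial (MvPolynomial σ R)) = 0 := by
  simp [jointTotalDegree]

theorem jointTotalDegree_C_X_le (i : σ) :
    jointTotalDegree (Polynomial.C (X i) : Polynomial (MvPolynomial σ R)) ≤ 1 := by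
  simpa [jointTotalDegree] using totalDegree_X_le (R := R) (some i)

theorem jointTotalDegree_X_le :
    jointTotalDegree (Polynomial.X : Polynomial (MvPolynomial σ R)) ≤ 1 := by
  simpa [jointTotalDegree] using totalDegree_X_le (R := R) (none : Option σ)

theorem jointTotalDegree_monomial_le (n : ℕ) (q : MvPolynomial σ R) :
    jointTotalDegree (Polynomial.monomial n q) ≤ q.totalDegree + n := by
  rw [← Polynomial.C_mul_X_pow_eq_monomial]
  simp only [jointTotalDegree, map_mul, map_pow, optionEquivLeft_symm_X]
  rw [optionEquivLeft_symm_apply, Polynomial.aevalTower_C]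
  refine (totalDegree_mul _ _).trans (add_le_add (totalDegree_rename_le _ _) ?_)
  exact (totalDegree_pow _ _).trans (by simpa using Nat.mul_le_mul_left n (totalDegree_X_le _))

theorem natDegree_le_jointTotalDegree (F : Polynomial (MvPolynomial σ R)) :
    F.natDegree ≤ jointTotalDegree F := by
  conv_lhs => rw [← (optionEquivLeft R σ).apply_symm_apply F]
  rw [natDegree_optionEquivLeft]
  exact degreeOf_le_totalDegree _ _

theorem totalDegree_coeff_add_le_jointTotalDegree {i : ℕ} (hi : F.coeff i ≠ 0) :
    (F.coeff i).totalDegree + i ≤ jointTotalDegree F := by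
  have hF := totalDegree_coeff_optionEquivLeft_add_le R σ _ i
    ((Polynomial.le_natDegree_of_ne_zero hi).trans (natDegree_le_jointTotalDegree F))
  rwa [AlgEquiv.apply_symm_apply] at hF

theorem degree_add_le_jointTotalDegree {i : ℕ} {d : σ →₀ ℕ}
    (hd : d ∈ (F.coeff i).support) :
    d.degree + i ≤ jointTotalDegree F :=
  (add_le_add_left (le_totalDegree hd) i).trans
    (totalDegree_coeff_add_le_jointTotalDegree fun h ↦ by simp [h] at hd)

theorem jointTotalDegree_le_of_eq_mul_add [IsDomain R]
    {D P Q Rem : Polynomial (MvPolynomial σ R)} {m N : ℕ} {c : R} (hc : c ≠ 0)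
    (hD : jointTotalDegree D ≤ m) (hDm : D.coeff m = MvPolynomial.C c)
    (hP : jointTotalDegree P ≤ m + N) (hdiv : P = D * Q + Rem) (hRem : Rem.degree < m) :
    jointTotalDegree Q ≤ N := by
  induction hk : Q.natDegree using Nat.strong_induction_on generalizing P Q with
  | _ k ih =>
  rcases eq_or_ne Q 0 with rfl | hQ
  · simp [jointTotalDegree]
  set q := Q.leadingCoeff
  have hPtop : P.coeff (m + k) = MvPolynomial.C c * q := by
    rw [hdiv, Polynomial.coeff_add, Polynomial.coeff_eq_zero_of_degree_lt
      (hRem.trans_le (by exact_mod_cast le_self_add)), add_zero,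
      Polynomial.coeff_mul_add_eq_of_natDegree_le ((natDegree_le_jointTotalDegree D).trans hD)
      hk.le, hDm, ← hk]
    rfl
  have hq : q.totalDegree + k ≤ N := by
    have hq0 : q ≠ 0 := Polynomial.leadingCoeff_ne_zero.mpr hQ
    have hc0 : (MvPolynomial.C c : MvPolynomial σ R) ≠ 0 := by simpa using hc
    have := totalDegree_coeff_add_le_jointTotalDegree (F := P) (i := m + k)
      (by rw [hPtop]; exact mul_ne_zero hc0 hq0)
    rw [hPtop, totalDegree_mul_of_isDomain hc0 hq0, totalDegree_C] at this
    omega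
  have hQ_eq : Q = Q.eraseLead + Polynomial.monomial k q := by
    rw [← hk]; exact Q.eraseLead_add_monomial_natDegree_leadingCoeff.symm
  -- `Q.eraseLead` is the quotient of `P - D * monomial k q` by `D`, with the same remainder
  have hrest : jointTotalDegree Q.eraseLead ≤ N := by
    rcases Q.eraseLead_natDegree_lt_or_eraseLead_eq_zero with hlt | h0
    · refine ih _ (hk ▸ hlt) (P := P - D * Polynomial.monomial k q) ?_ ?_ rfl
      · exact jointTotalDegree_sub_le_of_le hP
          (jointTotalDegree_mul_le_of_le hD ((jointTotalDegree_monomial_le _ _).trans hq))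
      · rw [hdiv]; nth_rewrite 1 [hQ_eq]; ring
    · simp [h0, jointTotalDegree]
  rw [hQ_eq]
  exact jointTotalDegree_add_le_of_le hrest ((jointTotalDegree_monomial_le _ _).trans hq)

end JointTotalDegree

section AffineFactors

def IsAffine (a : ℝ) (L : Polynomial R2) : Prop :=
  ∃ b c e : ℝ, L = cst a * X + cst b * Jv + cst c * Kv + cst e

namespace IsAffine

variable {a : ℝ} {L : Polynomial R2}

theorem add_natCast (hL : IsAffine a L) (i : ℕ) : IsAffine a (L + i) := by
  obtain ⟨b, c, e, rfl⟩ := hL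
  exact ⟨b, c, e + i, by simp only [cst, map_add, map_natCast]; ring⟩

theorem jointTotalDegree_le (hL : IsAffine a L) : jointTotalDegree L ≤ 1 := by
  obtain ⟨b, c, e, rfl⟩ := hL
  have hcst : ∀ x : ℝ, jointTotalDegree (cst x) ≤ 0 := fun x ↦ (jointTotalDegree_C_C x).le
  refine jointTotalDegree_add_le_of_le (jointTotalDegree_add_le_of_le
    (jointTotalDegree_add_le_of_le ?_ ?_) ?_) ((hcst e).trans zero_le_one)
  · simpa using jointTotalDegree_mul_le_of_le (hcst a) jointTotalDegree_X_le
  · exact jointTotalDegree_mul_le_of_le (hcst b) (jointTotalDegree_C_X_le 0)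
  · exact jointTotalDegree_mul_le_of_le (hcst c) (jointTotalDegree_C_X_le 1)

theorem coeff_one (hL : IsAffine a L) : L.coeff 1 = MvPolynomial.C a := by
  obtain ⟨b, c, e, rfl⟩ := hL
  simp [cst, Jv, Kv, coeff_C]

theorem jointTotalDegree_rfp_le (hL : IsAffine a L) (m : ℕ) :
    jointTotalDegree (rfp L m) ≤ m := by
  refine (jointTotalDegree_prod_le _ _).trans ?_
  simpa using Finset.sum_le_card_nsmul (Finset.range m) _ 1
    fun i _ ↦ (hL.add_natCast i).jointTotalDegree_le

theorem coeff_rfp (hL : IsAffine a L) (m : ℕ) :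
    (rfp L m).coeff m = MvPolynomial.C a ^ m := by
  have := coeff_prod_of_natDegree_le (s := Finset.range m) (fun i ↦ L + (i : Polynomial R2)) 1
    fun i _ ↦ (natDegree_le_jointTotalDegree _).trans (hL.add_natCast i).jointTotalDegree_le
  simpa [rfp, (hL.add_natCast _).coeff_one] using this

end IsAffine

theorem jointTotalDegree_Pnh_le (n h : ℕ) (lam th : ℝ) :
    jointTotalDegree (Pnh n h lam th) ≤ 2 * n + 2 * h + 2 := by
  have h1 : IsAffine 1 (X - 2 * Jv - 1) :=
    ⟨-2, 0, -1, by simp only [cst, map_neg, map_one, map_zero, map_ofNat]; ring⟩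
  have h2 : IsAffine 1 (X + 2 * (h : Polynomial R2) - 2 * Jv - 1) :=
    ⟨-2, 0, 2 * h - 1, by
      simp only [cst, map_sub, map_neg, map_mul, map_one, map_zero, map_natCast, map_ofNat]; ring⟩
  have h3 : IsAffine 1 (X - Jv) :=
    ⟨-1, 0, 0, by simp only [cst, map_neg, map_one, map_zero]; ring⟩
  have h4 : IsAffine (1 - th) (cst (1 - th) * X - Jv) :=
    ⟨-1, 0, 0, by simp only [cst, map_sub, map_neg, map_one, map_zero]; ring⟩
  have h5 : IsAffine (lam * th)
      (cst (lam * th) * X + (h : Polynomial R2) - (n : Polynomial R2) - Jv + Kv) :=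
    ⟨-1, 1, h - n, by simp only [cst, map_sub, map_neg, map_mul, map_one, map_natCast]; ring⟩
  have h6 : IsAffine th (cst th * X + (h : Polynomial R2) - (n : Polynomial R2) - Jv + Kv) :=
    ⟨-1, 1, h - n, by simp only [cst, map_sub, map_neg, map_one, map_natCast]; ring⟩
  have := jointTotalDegree_mul_le_of_le (jointTotalDegree_mul_le_of_le
    (jointTotalDegree_mul_le_of_le (jointTotalDegree_mul_le_of_le
    (jointTotalDegree_mul_le_of_le h1.jointTotalDegree_le h2.jointTotalDegree_le)
    (h3.jointTotalDegree_rfp_le h)) (h4.jointTotalDegree_rfp_le h))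
    (h5.jointTotalDegree_rfp_le n)) (h6.jointTotalDegree_rfp_le n)
  exact this.trans (by omega)

theorem jointTotalDegree_Dnhl_le_and_coeff (n h l : ℕ) (lam th : ℝ) :
    jointTotalDegree (Dnhl n h l lam th) ≤ n + 2 * h + l + 3 ∧
      (Dnhl n h l lam th).coeff (n + 2 * h + l + 3) = MvPolynomial.C (lam * th * th ^ h) := by
  have h2 : IsAffine 1 (X + (h : Polynomial R2) - 2 * Jv - 1) :=
    ⟨-2, 0, h - 1, by
      simp only [cst, map_sub, map_neg, map_one, map_zero, map_natCast, map_ofNat]; ring⟩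
  have h3 : IsAffine th (cst th * X - Jv) :=
    ⟨-1, 0, 0, by simp only [cst, map_neg, map_one, map_zero]; ring⟩
  have h4 : IsAffine 1 (X - (n : Polynomial R2) + (h : Polynomial R2) - 2 * Jv - 1 + Kv) :=
    ⟨-2, 1, h - n - 1, by
      simp only [cst, map_sub, map_neg, map_one, map_natCast, map_ofNat]; ring⟩
  have d1 : jointTotalDegree (cst (lam * th) * X ^ (l + 1)) ≤ l + 1 := by
    rw [cst, C_mul_X_pow_eq_monomial]
    exact (jointTotalDegree_monomial_le _ _).trans
      (by rw [MvPolynomial.totalDegree_C, zero_add])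
  have d12 := jointTotalDegree_mul_le_of_le d1 h2.jointTotalDegree_le
  have d123 := jointTotalDegree_mul_le_of_le d12 (h3.jointTotalDegree_rfp_le h)
  have hm : n + 2 * h + l + 3 = l + 1 + 1 + h + (n + h + 1) := by ring
  refine ⟨hm ▸ jointTotalDegree_mul_le_of_le d123 (h4.jointTotalDegree_rfp_le _), ?_⟩
  rw [Dnhl, hm, coeff_mul_add_eq_of_natDegree_le ((natDegree_le_jointTotalDegree _).trans d123)
      ((natDegree_le_jointTotalDegree _).trans (h4.jointTotalDegree_rfp_le _)),
    coeff_mul_add_eq_of_natDegree_le ((natDegree_le_jointTotalDegree _).trans d12)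
      ((natDegree_le_jointTotalDegree _).trans (h3.jointTotalDegree_rfp_le _)),
    coeff_mul_add_eq_of_natDegree_le ((natDegree_le_jointTotalDegree _).trans d1)
      ((natDegree_le_jointTotalDegree _).trans h2.jointTotalDegree_le),
    h2.coeff_one, h3.coeff_rfp, h4.coeff_rfp, cst, coeff_C_mul_X_pow, if_pos rfl]
  simp

end AffineFactors

section AlternatingDoubleSum

open MvPolynomial

noncomputable def altDoubleSum (h M l : ℕ) (q : MvPolynomial (Fin 2) ℝ) : ℝ :=
  ∑ u ∈ Finset.range h, (-1 : ℝ) ^ u * ((h - 1).choose u : ℝ) * (u : ℝ) ^ l *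
    ∑ v ∈ Finset.range (M + 1), (-1 : ℝ) ^ (M - v) * (M.choose v : ℝ) *
      MvPolynomial.eval (fun x : Fin 2 => if x = 0 then (u : ℝ) else (v : ℝ)) q

theorem altDoubleSum_eq_sum_support (m M l : ℕ) (q : MvPolynomial (Fin 2) ℝ) :
    altDoubleSum (m + 1) M l q = (-1) ^ m * ∑ d ∈ q.support, coeff d q *
      ((Δ_[1])^[m] (fun r : ℝ ↦ r ^ (l + d 0)) 0 *
        (Δ_[1])^[M] (fun r : ℝ ↦ r ^ d 1) 0) := by
  rw [altDoubleSum, mul_sum,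
    sum_mul_sum_mul_eval_eq q _ _ _ _ (fun u : ℕ ↦ (u : ℝ)) (fun v : ℕ ↦ (v : ℝ))]
  simp only [Nat.add_sub_cancel]
  refine sum_congr rfl fun d _ ↦ ?_
  have hsign : ∑ u ∈ range (m + 1),
      (-1 : ℝ) ^ u * (m.choose u : ℝ) * (u : ℝ) ^ l * (u : ℝ) ^ d 0 =
        (-1) ^ m * (Δ_[1])^[m] (fun r : ℝ ↦ r ^ (l + d 0)) 0 := by
    rw [← sum_range_neg_one_pow_sub_mul_choose_mul_pow_eq_fwdDiff,
      ← sum_range_neg_one_pow_mul_choose_mul]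
    exact sum_congr rfl fun u _ ↦ by ring
  rw [hsign, sum_range_neg_one_pow_sub_mul_choose_mul_pow_eq_fwdDiff]
  ring

theorem altDoubleSum_eq_zero {h : ℕ} (hh : 1 ≤ h) {M l : ℕ} {q : MvPolynomial (Fin 2) ℝ}
    (hq : ∀ d ∈ q.support, l + d 0 < h - 1 ∨ d 1 < M) : altDoubleSum h M l q = 0 := by
  obtain ⟨m, rfl⟩ := Nat.exists_eq_add_of_le' hh
  simp only [Nat.add_sub_cancel] at hq
  rw [altDoubleSum_eq_sum_support, sum_eq_zero, mul_zero]
  intro d hd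
  rcases hq d hd with hu | hv
  · rw [fwdDiff_iter_pow_eq_zero_of_lt hu, Pi.zero_apply, zero_mul, mul_zero]
  · rw [fwdDiff_iter_pow_eq_zero_of_lt hv, Pi.zero_apply, mul_zero, mul_zero]

theorem altDoubleSum_eq_coeff {h : ℕ} (hh : 1 ≤ h) {M l : ℕ} (hl : l < h)
    {q : MvPolynomial (Fin 2) ℝ} (hq : ∀ d ∈ q.support, l + d 0 + d 1 ≤ h - 1 + M) :
    altDoubleSum h M l q = (-1) ^ (h - 1) * ((h - 1).factorial : ℝ) * (M.factorial : ℝ) *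
      coeff (Finsupp.single 0 (h - l - 1) + Finsupp.single 1 M) q := by
  obtain ⟨m, rfl⟩ := Nat.exists_eq_add_of_le' hh
  simp only [Nat.add_sub_cancel] at hq ⊢
  set d₀ : Fin 2 →₀ ℕ := Finsupp.single 0 (m + 1 - l - 1) + Finsupp.single 1 M
  rw [altDoubleSum_eq_sum_support, sum_eq_single d₀]
  · rw [show l + d₀ 0 = m by simp [d₀]; omega, show d₀ 1 = M by simp [d₀],
      fwdDiff_iter_eq_factorial, fwdDiff_iter_eq_factorial]
    simp only [Pi.natCast_apply]
    ring
  · intro d hd hne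
    by_cases hu : l + d 0 < m
    · rw [fwdDiff_iter_pow_eq_zero_of_lt hu, Pi.zero_apply, zero_mul, mul_zero]
    by_cases hv : d 1 < M
    · rw [fwdDiff_iter_pow_eq_zero_of_lt hv, Pi.zero_apply, mul_zero, mul_zero]
    refine absurd (Finsupp.ext fun i ↦ ?_) hne
    have := hq d hd
    fin_cases i <;> simp [d₀] <;> omega
  · intro h
    rw [notMem_support_iff.mp h, zero_mul]

end AlternatingDoubleSum

theorem stmt_7 (n h l : ℕ) (hh1 : 1 ≤ h) (hhn : h ≤ n) (hl : l ≤ n - 1)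
    (lam th : ℝ) (hlam0 : 0 < lam) (hth0 : 0 < th)
    (Q Rem : Polynomial R2)
    (hdiv : Pnh n h lam th = Dnhl n h l lam th * Q + Rem)
    (hRem : Rem.degree < ((n + 2 * h + l + 3 : ℕ) : WithBot ℕ)) :
    (∀ i : ℕ, 1 ≤ i → i ≤ n - l - 1 →
      ∑ u ∈ Finset.range h, (-1 : ℝ) ^ u * ((h - 1).choose u : ℝ) * (u : ℝ) ^ l *
        ∑ v ∈ Finset.range (n - h + 1), (-1 : ℝ) ^ (n - h - v) * ((n - h).choose v : ℝ) *
          MvPolynomial.eval (fun x : Fin 2 => if x = 0 then (u : ℝ) else (v : ℝ)) (Q.coeff i)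
        = 0) ∧
    (l ≤ h - 1 →
      ∑ u ∈ Finset.range h, (-1 : ℝ) ^ u * ((h - 1).choose u : ℝ) * (u : ℝ) ^ l *
        ∑ v ∈ Finset.range (n - h + 1), (-1 : ℝ) ^ (n - h - v) * ((n - h).choose v : ℝ) *
          MvPolynomial.eval (fun x : Fin 2 => if x = 0 then (u : ℝ) else (v : ℝ)) (Q.coeff 0)
        = (-1 : ℝ) ^ (h - 1) * ((h - 1).factorial : ℝ) * ((n - h).factorial : ℝ) *
            MvPolynomial.coeff (Finsupp.single 0 (h - l - 1) + Finsupp.single 1 (n - h))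
              (Q.coeff 0)) ∧
    (h ≤ l →
      ∑ u ∈ Finset.range h, (-1 : ℝ) ^ u * ((h - 1).choose u : ℝ) * (u : ℝ) ^ l *
        ∑ v ∈ Finset.range (n - h + 1), (-1 : ℝ) ^ (n - h - v) * ((n - h).choose v : ℝ) *
          MvPolynomial.eval (fun x : Fin 2 => if x = 0 then (u : ℝ) else (v : ℝ)) (Q.coeff 0)
        = 0) := by
  obtain ⟨hD, hDtop⟩ := jointTotalDegree_Dnhl_le_and_coeff n h l lam th
  have hQ : jointTotalDegree Q ≤ n - l - 1 :=
    jointTotalDegree_le_of_eq_mul_add (by positivity) hD hDtop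
      ((jointTotalDegree_Pnh_le n h lam th).trans (by omega)) hdiv hRem
  have hsupp : ∀ i, ∀ d ∈ (Q.coeff i).support, d 0 + d 1 + i ≤ n - l - 1 := by
    intro i d hd
    simpa [Finsupp.degree_eq_sum, Fin.sum_univ_two] using
      (degree_add_le_jointTotalDegree hd).trans hQ
  refine ⟨fun i hi1 _ ↦ altDoubleSum_eq_zero hh1 fun d hd ↦ ?_,
    fun hlh ↦ altDoubleSum_eq_coeff hh1 (by omega) fun d hd ↦ ?_,
    fun hhl ↦ altDoubleSum_eq_zero hh1 fun d hd ↦ ?_⟩ <;>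
  · have := hsupp _ d hd
    omega
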